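/- Let d₁(τ,x) = (x + (r + σ²/2)τ)/(σ√τ) with σ > 0, r ≥ 0, and let w(τ,x) = K e^{rτ + x} e^{-d₁(τ,x)²/2}/(σ√(2πτ)). Then for each p ≥ 1, k ∈ {0,1,2}, and T > 0, there exists a constant C₀ > 0 depending only on p, σ, r, T, K such that ∫_ℝ |w(τ,x)|^p |d₁(τ,x)|^{pk} dx ≤ C₀^p τ^{-(p−1)/2} for all 0 < τ ≤ T. -/
import Mathlib


open MeasureTheory Real

/-- Black–Scholes argument `d₁(τ,x) = (x + (r + σ²/2)τ)/(σ√τ)`. -/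
noncomputable def dOne (σ r τ x : ℝ) : ℝ :=
  (x + (r + σ ^ 2 / 2) * τ) / (σ * Real.sqrt τ)

lemma abs_pow_mul_exp_le (t : ℝ) (k : ℕ) (hk : k ≤ 2) :
    |t| ^ k * Real.exp (-t ^ 2 / 4) ≤ 5 := by
  have ht := abs_nonneg t
  have ht2 : |t| ^ 2 = t ^ 2 := sq_abs t
  have h1 : |t| ^ k ≤ 1 + t ^ 2 := by
    interval_cases k <;> nlinarith [sq_nonneg (|t| - 1)]
  have h2 : 1 + t ^ 2 ≤ 5 * Real.exp (t ^ 2 / 4) := by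
    nlinarith [Real.add_one_le_exp (t ^ 2 / 4)]
  have h3 : Real.exp (-t ^ 2 / 4) * Real.exp (t ^ 2 / 4) = 1 := by
    rw [← Real.exp_add]; ring_nf; exact Real.exp_zero
  have h4 : 0 < Real.exp (-t ^ 2 / 4) := Real.exp_pos _
  have h5 : 0 < Real.exp (t ^ 2 / 4) := Real.exp_pos _
  nlinarith [mul_le_mul_of_nonneg_right h1 h4.le, mul_le_mul_of_nonneg_right h2 h4.le]

/-- for `w(τ,x) = K e^{rτ+x} e^{-d₁²/2}/(σ√(2πτ))` and `k ∈ {0,1,2}`,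
`∫ |w(τ,x)|^p |d₁(τ,x)|^{pk} dx ≤ C₀^p τ^{-(p−1)/2}` for all `0 < τ ≤ T`. -/
theorem bs_gaussian_term_weighted_Lp_bound
    (σ r K p T : ℝ) (hσ : 0 < σ) (hr : 0 ≤ r) (hK : 0 < K)
    (hp : 1 ≤ p) (hT : 0 < T) :
    ∃ C₀ : ℝ, 0 < C₀ ∧ ∀ k : ℕ, k ≤ 2 → ∀ τ : ℝ, 0 < τ → τ ≤ T →
      (∫ x : ℝ, |K * Real.exp (r * τ + x) * Real.exp (-(dOne σ r τ x) ^ 2 / 2) /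
          (σ * Real.sqrt (2 * Real.pi * τ))| ^ p * |dOne σ r τ x| ^ (p * (k : ℝ))) ≤
        C₀ ^ p * τ ^ (-(p - 1) / 2) := by
  have hπ : (0:ℝ) < π := Real.pi_pos
  have hp0 : (0:ℝ) < p := lt_of_lt_of_le one_pos hp
  set a : ℝ := r + σ ^ 2 / 2 with ha
  set A₁ : ℝ := 5 * K / (σ * Real.sqrt (2 * π)) with hA₁
  have hA₁pos : 0 < A₁ := by positivity
  set M : ℝ := max (2 * σ * Real.sqrt π) 1 with hM
  have hM1 : (1:ℝ) ≤ M := le_max_right _ _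
  refine ⟨A₁ * Real.exp (σ ^ 2 * T / 2) * M, by positivity, ?_⟩
  intro k hk τ hτ hτT
  have hτ' : (0:ℝ) ≤ τ := hτ.le
  have hsτ : 0 < Real.sqrt τ := Real.sqrt_pos.mpr hτ
  set b : ℝ := p / (4 * σ ^ 2 * τ) with hb
  have hbpos : 0 < b := by positivity
  set c : ℝ := 2 * σ ^ 2 * τ - a * τ with hc
  set S : ℝ := σ * Real.sqrt (2 * π * τ) with hS
  have hSpos : 0 < S := by positivity
  set E : ℝ := (5 * K / S) ^ p * Real.exp (p * (σ ^ 2 * τ / 2)) with hE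
  set g : ℝ → ℝ := fun x => E * Real.exp (-b * (x - c) ^ 2) with hg
  -- pointwise bound
  have hfg : ∀ x : ℝ, |K * Real.exp (r * τ + x) * Real.exp (-(dOne σ r τ x) ^ 2 / 2) / S| ^ p
      * |dOne σ r τ x| ^ (p * (k : ℝ)) ≤ g x := by
    intro x
    set d : ℝ := dOne σ r τ x with hd
    have hd' : d = (x + a * τ) / (σ * Real.sqrt τ) := rfl
    have hd2 : d ^ 2 = (x + a * τ) ^ 2 / (σ ^ 2 * τ) := by
      rw [hd', div_pow, mul_pow, Real.sq_sqrt hτ']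
    have habs : |K * Real.exp (r * τ + x) * Real.exp (-d ^ 2 / 2) / S|
        = K * Real.exp (r * τ + x) * Real.exp (-d ^ 2 / 2) / S := abs_of_pos (by positivity)
    have hdk : |d| ^ (p * (k : ℝ)) = (|d| ^ k) ^ p := by
      rw [mul_comm, Real.rpow_mul (abs_nonneg d), Real.rpow_natCast]
    have key : |d| ^ k * Real.exp (-d ^ 2 / 4) ≤ 5 := abs_pow_mul_exp_le d k hk
    have hbase : K * Real.exp (r * τ + x) * Real.exp (-d ^ 2 / 2) / S * |d| ^ k
        ≤ 5 * K / S * Real.exp ((r * τ + x) - d ^ 2 / 4) := by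
      have e1 : Real.exp (-d ^ 2 / 2) = Real.exp (-d ^ 2 / 4) * Real.exp (-d ^ 2 / 4) := by
        rw [← Real.exp_add]; ring_nf
      have hP : (0:ℝ) ≤ K * Real.exp (r * τ + x) * Real.exp (-d ^ 2 / 4) / S := by positivity
      calc K * Real.exp (r * τ + x) * Real.exp (-d ^ 2 / 2) / S * |d| ^ k
          = K * Real.exp (r * τ + x) * Real.exp (-d ^ 2 / 4) / S
              * (|d| ^ k * Real.exp (-d ^ 2 / 4)) := by rw [e1]; ring
        _ ≤ K * Real.exp (r * τ + x) * Real.exp (-d ^ 2 / 4) / S * 5 :=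
            mul_le_mul_of_nonneg_left key hP
        _ = 5 * K / S * Real.exp ((r * τ + x) - d ^ 2 / 4) := by
            rw [Real.exp_sub, neg_div, Real.exp_neg]; ring
    have hiden : ((r * τ + x) - d ^ 2 / 4) * p = p * (σ ^ 2 * τ / 2) + (-b * (x - c) ^ 2) := by
      rw [hd2, hb, hc, ha]
      field_simp
      ring
    calc |K * Real.exp (r * τ + x) * Real.exp (-d ^ 2 / 2) / S| ^ p * |d| ^ (p * (k : ℝ))
        = (K * Real.exp (r * τ + x) * Real.exp (-d ^ 2 / 2) / S * |d| ^ k) ^ p := by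
          rw [habs, hdk, ← Real.mul_rpow (by positivity) (by positivity)]
      _ ≤ (5 * K / S * Real.exp ((r * τ + x) - d ^ 2 / 4)) ^ p :=
          Real.rpow_le_rpow (by positivity) hbase hp0.le
      _ = (5 * K / S) ^ p * Real.exp (((r * τ + x) - d ^ 2 / 4) * p) := by
          rw [Real.mul_rpow (by positivity) (by positivity), Real.exp_mul]
      _ = g x := by
          rw [hiden, Real.exp_add, hg, hE]; ring
  -- integrability of the dominating function
  have hgint : Integrable g := by
    have h1 : Integrable (fun x : ℝ => Real.exp (-b * (x - c) ^ 2)) :=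
      (integrable_exp_neg_mul_sq hbpos).comp_sub_right c
    exact h1.const_mul E
  have step1 : (∫ x : ℝ, |K * Real.exp (r * τ + x) * Real.exp (-(dOne σ r τ x) ^ 2 / 2) / S| ^ p
      * |dOne σ r τ x| ^ (p * (k : ℝ))) ≤ ∫ x : ℝ, g x := by
    refine integral_mono_of_nonneg (Filter.Eventually.of_forall fun x => by positivity) hgint
      (Filter.Eventually.of_forall hfg)
  have step2 : (∫ x : ℝ, g x) = E * Real.sqrt (π / b) := by
    show (∫ x : ℝ, E * Real.exp (-b * (x - c) ^ 2)) = E * Real.sqrt (π / b)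
    rw [MeasureTheory.integral_const_mul]
    congr 1
    rw [integral_sub_right_eq_self (fun y => Real.exp (-b * y ^ 2)) c]
    exact integral_gaussian b
  -- final arithmetic
  have e1 : (5 * K / S : ℝ) = A₁ / Real.sqrt τ := by
    rw [hS, hA₁, Real.sqrt_mul (by positivity) τ, div_div, mul_assoc]
  have hsτp : Real.sqrt τ ^ p = τ ^ (p / 2) := by
    rw [Real.sqrt_eq_rpow, ← Real.rpow_mul hτ']
    congr 1
    ring
  have e2 : (A₁ / Real.sqrt τ) ^ p = A₁ ^ p * τ ^ (-(p / 2)) := by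
    rw [Real.div_rpow hA₁pos.le (Real.sqrt_nonneg τ), hsτp, Real.rpow_neg hτ']
    ring
  have e3 : Real.sqrt (π / b) ≤ 2 * σ * Real.sqrt π * Real.sqrt τ := by
    have h1 : π / b ≤ 4 * σ ^ 2 * π * τ := by
      rw [hb, div_div_eq_mul_div]
      calc π * (4 * σ ^ 2 * τ) / p ≤ π * (4 * σ ^ 2 * τ) / 1 := by
            apply div_le_div_of_nonneg_left (by positivity) one_pos hp
        _ = 4 * σ ^ 2 * π * τ := by ring
    have h2 : Real.sqrt (4 * σ ^ 2 * π * τ) = 2 * σ * Real.sqrt π * Real.sqrt τ := by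
      rw [show (4 * σ ^ 2 * π * τ : ℝ) = (2 * σ * Real.sqrt π * Real.sqrt τ) ^ 2 by
        rw [mul_pow, mul_pow, mul_pow, Real.sq_sqrt hπ.le, Real.sq_sqrt hτ']; ring]
      exact Real.sqrt_sq (by positivity)
    rw [← h2]
    exact Real.sqrt_le_sqrt h1
  have e4 : Real.exp (p * (σ ^ 2 * τ / 2)) ≤ Real.exp (σ ^ 2 * T / 2) ^ p := by
    rw [mul_comm, Real.exp_mul]
    exact Real.rpow_le_rpow (Real.exp_pos _).le
      (Real.exp_le_exp.mpr (by nlinarith)) hp0.le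
  have e5 : 2 * σ * Real.sqrt π ≤ M ^ p := by
    calc 2 * σ * Real.sqrt π ≤ M := le_max_left _ _
      _ = M ^ (1:ℝ) := (Real.rpow_one M).symm
      _ ≤ M ^ p := Real.rpow_le_rpow_of_exponent_le hM1 hp
  have e6 : τ ^ (-(p / 2)) * Real.sqrt τ = τ ^ (-(p - 1) / 2) := by
    rw [Real.sqrt_eq_rpow, ← Real.rpow_add hτ]
    congr 1
    ring
  have final : E * Real.sqrt (π / b) ≤
      (A₁ * Real.exp (σ ^ 2 * T / 2) * M) ^ p * τ ^ (-(p - 1) / 2) := by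
    calc E * Real.sqrt (π / b)
        = A₁ ^ p * τ ^ (-(p / 2)) * Real.exp (p * (σ ^ 2 * τ / 2)) * Real.sqrt (π / b) := by
          rw [hE, e1, e2]
      _ ≤ A₁ ^ p * τ ^ (-(p / 2)) * Real.exp (σ ^ 2 * T / 2) ^ p
            * (2 * σ * Real.sqrt π * Real.sqrt τ) := by
          have h0 : (0:ℝ) ≤ A₁ ^ p * τ ^ (-(p / 2)) := by positivity
          have := mul_le_mul e4 e3 (Real.sqrt_nonneg _) (by positivity)
          calc A₁ ^ p * τ ^ (-(p / 2)) * Real.exp (p * (σ ^ 2 * τ / 2)) * Real.sqrt (π / b)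
              = A₁ ^ p * τ ^ (-(p / 2))
                  * (Real.exp (p * (σ ^ 2 * τ / 2)) * Real.sqrt (π / b)) := by ring
            _ ≤ A₁ ^ p * τ ^ (-(p / 2))
                  * (Real.exp (σ ^ 2 * T / 2) ^ p * (2 * σ * Real.sqrt π * Real.sqrt τ)) :=
                mul_le_mul_of_nonneg_left this h0
            _ = A₁ ^ p * τ ^ (-(p / 2)) * Real.exp (σ ^ 2 * T / 2) ^ p
                  * (2 * σ * Real.sqrt π * Real.sqrt τ) := by ring
      _ ≤ A₁ ^ p * τ ^ (-(p / 2)) * Real.exp (σ ^ 2 * T / 2) ^ p * (M ^ p * Real.sqrt τ) := by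
          have h0 : (0:ℝ) ≤ A₁ ^ p * τ ^ (-(p / 2)) * Real.exp (σ ^ 2 * T / 2) ^ p := by
            positivity
          exact mul_le_mul_of_nonneg_left
            (mul_le_mul_of_nonneg_right e5 (Real.sqrt_nonneg τ)) h0
      _ = (A₁ * Real.exp (σ ^ 2 * T / 2) * M) ^ p * (τ ^ (-(p / 2)) * Real.sqrt τ) := by
          rw [Real.mul_rpow (by positivity) (by positivity),
            Real.mul_rpow hA₁pos.le (Real.exp_pos _).le]
          ring
      _ = (A₁ * Real.exp (σ ^ 2 * T / 2) * M) ^ p * τ ^ (-(p - 1) / 2) := by rw [e6]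
  calc (∫ x : ℝ, |K * Real.exp (r * τ + x) * Real.exp (-(dOne σ r τ x) ^ 2 / 2) / S| ^ p
      * |dOne σ r τ x| ^ (p * (k : ℝ))) ≤ ∫ x : ℝ, g x := step1
    _ = E * Real.sqrt (π / b) := step2
    _ ≤ _ := final
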